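/- arXiv:1512.05991 — 2 statements merged into one kernel-verified Lean document; each statement's English description precedes it below -/
import Mathlib

section
/- For all integers d ≥ 1 and v ≥ 1, one has k(2d, 2v) + 3·k(d, v) < 2·(2d+1)^{2v}. (This is the arithmetic content of the bound |Irr(G(2d,2,w))| < (2d+1)^w for even w = 2v, where the irreducible character count equals (k(2d,2v) − k(d,v))/2 + 2·k(d,v).) -/
/-!
An `s`-tuple of partitions of total size `t` is the same as a multiset of positive parts,
each coloured by one of `s` colours, summing to `t`. Listing the coloured parts and writing a
part `p` of colour `i` as `p - 1` blanks followed by the letter `i` embeds these injectively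
into the words of length `t` over an alphabet of `s + 1` letters, so `k(s, t) ≤ (s + 1) ^ t`.
Hence `k(2d, 2v) + 3 k(d, v) ≤ (2d + 1) ^ (2v) + 3 (d + 1) ^ v`, and
`3 (d + 1) ^ v < (4 (d + 1)) ^ v ≤ (2d + 1) ^ (2v)`.
-/

/-- `kTuples s t` is the number of `s`-tuples `(λ₁, …, λ_s)` of integer partitions
(of arbitrary nonnegative integers) with `|λ₁| + ⋯ + |λ_s| = t`. -/
noncomputable def kTuples (s t : ℕ) : ℕ :=
  Nat.card { f : Fin s → Σ n : ℕ, Nat.Partition n // ∑ i, (f i).1 = t }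

theorem Nat.Partition.sigma_ext {x y : Σ n : ℕ, Nat.Partition n}
    (h : x.2.parts = y.2.parts) : x = y := by
  obtain ⟨n, P⟩ := x
  obtain ⟨m, Q⟩ := y
  obtain rfl : n = m := by rw [← P.parts_sum, ← Q.parts_sum, h]
  exact congrArg (Sigma.mk n) (Nat.Partition.ext h)

namespace ColouredParts

variable {α : Type*}

/-- A part `p` of colour `i` is written as `p - 1` blanks followed by the letter `i`. -/
def encodeWord : List (α × ℕ) → List (Option α)
  | [] => []
  | (i, p) :: l => List.replicate (p - 1) none ++ some i :: encodeWord l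

/-- `c` counts the blanks read since the last letter. -/
def decodeWord : ℕ → List (Option α) → List (α × ℕ)
  | _, [] => []
  | c, none :: w => decodeWord (c + 1) w
  | c, some i :: w => (i, c + 1) :: decodeWord 0 w

theorem decodeWord_replicate_none_append (k c : ℕ) (w : List (Option α)) :
    decodeWord c (List.replicate k none ++ w) = decodeWord (c + k) w := by
  induction k generalizing c with
  | zero => rfl
  | succ k ih =>
    rw [List.replicate_succ, List.cons_append, decodeWord, ih, Nat.add_assoc, Nat.add_comm 1 k]

theorem decodeWord_encodeWord {l : List (α × ℕ)} (hl : ∀ x ∈ l, 0 < x.2) :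
    decodeWord 0 (encodeWord l) = l := by
  induction l with
  | nil => rfl
  | cons x l ih =>
    obtain ⟨i, p⟩ := x
    have hp : 0 < p := hl (i, p) List.mem_cons_self
    rw [encodeWord, decodeWord_replicate_none_append, decodeWord, show 0 + (p - 1) + 1 = p by omega,
      ih fun x hx ↦ hl x (List.mem_cons_of_mem _ hx)]

theorem length_encodeWord {l : List (α × ℕ)} (hl : ∀ x ∈ l, 0 < x.2) :
    (encodeWord l).length = (l.map Prod.snd).sum := by
  induction l with
  | nil => rfl
  | cons x l ih =>
    obtain ⟨i, p⟩ := x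
    have hp : 0 < p := hl (i, p) List.mem_cons_self
    rw [encodeWord, List.length_append, List.length_cons, List.length_replicate,
      ih fun x hx ↦ hl x (List.mem_cons_of_mem _ hx), List.map_cons, List.sum_cons]
    omega

variable {ι : Type*} [Fintype ι]

def ofTuple (f : ι → Σ n : ℕ, Nat.Partition n) : Multiset (ι × ℕ) :=
  ∑ i, (f i).2.parts.map (Prod.mk i)

theorem count_ofTuple [DecidableEq ι] (f : ι → Σ n : ℕ, Nat.Partition n) (j : ι) (p : ℕ) :
    (ofTuple f).count (j, p) = (f j).2.parts.count p := by
  classical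
  rw [ofTuple, Multiset.count_sum', Finset.sum_eq_single j]
  · exact Multiset.count_map_eq_count' _ _ (Prod.mk_right_injective j) _
  · intro i _ hij
    simp [hij]
  · simp

theorem ofTuple_injective : Function.Injective (ofTuple (ι := ι)) := by
  classical
  intro f g h
  funext j
  have hparts : (f j).2.parts = (g j).2.parts := Multiset.ext.2 fun p ↦ by
    rw [← count_ofTuple, ← count_ofTuple, h]
  exact Nat.Partition.sigma_ext hparts

theorem pos_of_mem_ofTuple {f : ι → Σ n : ℕ, Nat.Partition n} {x : ι × ℕ}
    (hx : x ∈ ofTuple f) : 0 < x.2 := by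
  simp only [ofTuple, Multiset.mem_sum, Finset.mem_univ, true_and, Multiset.mem_map] at hx
  obtain ⟨i, p, hp, rfl⟩ := hx
  exact (f i).2.parts_pos hp

theorem sum_map_snd_ofTuple (f : ι → Σ n : ℕ, Nat.Partition n) :
    ((ofTuple f).map Prod.snd).sum = ∑ i, (f i).1 := by
  rw [ofTuple, ← Multiset.coe_mapAddMonoidHom, map_sum, ← Multiset.coe_sumAddMonoidHom,
    map_sum]
  refine Finset.sum_congr rfl fun i _ ↦ ?_
  simp [Multiset.map_map, (f i).2.parts_sum]

end ColouredParts

open ColouredParts in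
theorem kTuples_le_pow (s t : ℕ) : kTuples s t ≤ (s + 1) ^ t := by
  have hpos (f : Fin s → Σ n : ℕ, Nat.Partition n) :
      ∀ x ∈ (ofTuple f).toList, 0 < x.2 :=
    fun _ hx ↦ pos_of_mem_ofTuple (Multiset.mem_toList.1 hx)
  let word (x : { f : Fin s → Σ n : ℕ, Nat.Partition n // ∑ i, (f i).1 = t }) :
      List.Vector (Option (Fin s)) t :=
    ⟨encodeWord (ofTuple x.1).toList, by
      rw [length_encodeWord (hpos x.1), ← Multiset.sum_coe, ← Multiset.map_coe,
        Multiset.coe_toList, sum_map_snd_ofTuple, x.2]⟩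
  have hword : Function.Injective word := by
    intro x y h
    have hlist := congrArg (decodeWord 0 ∘ Subtype.val) h
    simp only [Function.comp_apply, word, decodeWord_encodeWord (hpos _)] at hlist
    have hparts : ofTuple x.1 = ofTuple y.1 := by
      rw [← Multiset.coe_toList (ofTuple x.1), hlist, Multiset.coe_toList]
    exact Subtype.ext (ofTuple_injective hparts)
  calc kTuples s t ≤ Nat.card (List.Vector (Option (Fin s)) t) :=
        Nat.card_le_card_of_injective word hword
    _ = (s + 1) ^ t := by simp [Nat.card_eq_fintype_card, card_vector]

theorem three_mul_succ_pow_lt (d v : ℕ) (hd : 1 ≤ d) (hv : 1 ≤ v) :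
    3 * (d + 1) ^ v < (2 * d + 1) ^ (2 * v) :=
  calc 3 * (d + 1) ^ v < 4 * (d + 1) ^ v := by have := pow_pos (by omega : 0 < d + 1) v; omega
    _ ≤ 4 ^ v * (d + 1) ^ v := Nat.mul_le_mul_right _ (Nat.le_self_pow (by omega) 4)
    _ ≤ ((2 * d + 1) ^ 2) ^ v := by rw [← mul_pow]; exact Nat.pow_le_pow_left (by nlinarith) v
    _ = (2 * d + 1) ^ (2 * v) := by rw [← pow_mul]

theorem kTuples_two_mul_add_three_mul_lt (d v : ℕ) (hd : 1 ≤ d) (hv : 1 ≤ v) :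
    kTuples (2 * d) (2 * v) + 3 * kTuples d v < 2 * (2 * d + 1) ^ (2 * v) := by
  have h₁ := kTuples_le_pow (2 * d) (2 * v)
  have h₂ := kTuples_le_pow d v
  have h₃ := three_mul_succ_pow_lt d v hd hv
  omega
end

section
/- Let p ≥ 3 be an odd prime and w ≥ 1 an integer. Then 2·k((p−1)/2, w) < p^w. -/
/-!
Every `s`-tuple of partitions of total size `t + 1` arises from a tuple of total size `j ≤ t` by
adding a part of size `t + 1 - j` to one of its `s` partitions, so
`k(s, t + 1) ≤ s · ∑_{j ≤ t} k(s, j)`. Together with `k(s, 0) = 1` this gives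
`k(s, t + 1) ≤ s (s + 1)^t`, the number of `s`-coloured compositions of `t + 1`.
For `s = (p - 1) / 2` we get `2 k(s, t + 1) ≤ (p - 1) p^t < p^(t + 1)`.
-/

open Finset

namespace Nat.Partition

theorem sigma_ext_s14 {x y : Σ n, Partition n} (h : x.2.parts = y.2.parts) : x = y := by
  obtain ⟨n, P⟩ := x
  obtain ⟨m, Q⟩ := y
  obtain rfl : n = m := by rw [← P.parts_sum, ← Q.parts_sum, h]
  exact congrArg _ (Partition.ext h)

theorem sigma_eq_of_fst_eq_zero {x y : Σ n, Partition n} (hx : x.1 = 0) (hy : y.1 = 0) :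
    x = y := by
  obtain ⟨n, P⟩ := x
  obtain ⟨m, Q⟩ := y
  subst hx hy
  exact congrArg _ (Subsingleton.elim P Q)

def consSucc (a : ℕ) (x : Σ n, Partition n) : Σ n, Partition n :=
  ⟨x.1 + (a + 1), ⟨(a + 1) ::ₘ x.2.parts, by grind [x.2.parts_pos],
    by simp [x.2.parts_sum, add_comm]⟩⟩

theorem exists_consSucc_eq (x : Σ n, Partition n) (hx : x.1 ≠ 0) :
    ∃ a y, consSucc a y = x := by
  obtain ⟨b, hb⟩ := Multiset.exists_mem_of_ne_zero fun h : x.2.parts = 0 =>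
    hx (by rw [← x.2.parts_sum, h, Multiset.sum_zero])
  have hb_pos := x.2.parts_pos hb
  refine ⟨b - 1, ⟨x.1 - b, partitionWithPartEquiv hb_pos (le_of_mem_parts hb) ⟨x.2, hb⟩⟩,
    sigma_ext_s14 ?_⟩
  simp [consSucc, Nat.sub_add_cancel hb_pos, Multiset.cons_erase hb]

end Nat.Partition

open Nat.Partition

abbrev PartitionTuples (s t : ℕ) : Type :=
  { f : Fin s → Σ n : ℕ, Nat.Partition n // ∑ i, (f i).1 = t }

namespace PartitionTuples

variable {s : ℕ}

theorem sum_fst_update_consSucc (f : Fin s → Σ n, Nat.Partition n) (i : Fin s) (a : ℕ) :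
    ∑ k, (Function.update f i (consSucc a (f i)) k).1 = ∑ k, (f k).1 + (a + 1) := by
  rw [← add_sum_erase _ _ (mem_univ i), ← add_sum_erase _ (fun k => (f k).1) (mem_univ i),
    Function.update_self,
    sum_congr rfl fun k hk => by rw [Function.update_of_ne (ne_of_mem_erase hk)], consSucc]
  ring

def consSuccAt {t : ℕ} (x : Σ (_ : Fin s) (a : Fin (t + 1)), PartitionTuples s (t - a)) :
    PartitionTuples s (t + 1) :=
  ⟨Function.update x.2.2.1 x.1 (consSucc x.2.1 (x.2.2.1 x.1)), by
    rw [sum_fst_update_consSucc, x.2.2.2]; omega⟩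

theorem consSuccAt_surjective (t : ℕ) : Function.Surjective (consSuccAt (s := s) (t := t)) := by
  rintro ⟨g, hg⟩
  obtain ⟨i, -, hi⟩ := exists_ne_zero_of_sum_ne_zero (by rw [hg]; exact t.succ_ne_zero)
  obtain ⟨a, y, hy⟩ := exists_consSucc_eq (g i) hi
  have hg' : Function.update (Function.update g i y) i
      (consSucc a (Function.update g i y i)) = g := by simp [hy]
  have hsum := sum_fst_update_consSucc (Function.update g i y) i a
  rw [hg', hg] at hsum
  exact ⟨⟨i, ⟨a, by omega⟩, ⟨Function.update g i y, show _ = t - a by omega⟩⟩, Subtype.ext hg'⟩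

instance : Subsingleton (PartitionTuples s 0) :=
  ⟨fun f g => Subtype.ext <| funext fun i => sigma_eq_of_fst_eq_zero
    (sum_eq_zero_iff.mp f.2 i (mem_univ i)) (sum_eq_zero_iff.mp g.2 i (mem_univ i))⟩

instance finite (t : ℕ) : Finite (PartitionTuples s t) := by
  induction t using Nat.strong_induction_on with
  | _ t ih =>
    cases t with
    | zero => infer_instance
    | succ t =>
      have := fun a : Fin (t + 1) => ih (t - a) (by omega)
      exact Finite.of_surjective _ (consSuccAt_surjective t)

end PartitionTuples

theorem kTuples_zero_le_one (s : ℕ) : kTuples s 0 ≤ 1 :=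
  Finite.card_le_one_iff_subsingleton.mpr inferInstance

theorem kTuples_succ_le_mul_sum (s t : ℕ) :
    kTuples s (t + 1) ≤ s * ∑ j ∈ range (t + 1), kTuples s j := by
  calc kTuples s (t + 1)
      ≤ Nat.card (Σ (_ : Fin s) (a : Fin (t + 1)), PartitionTuples s (t - a)) :=
        Nat.card_le_card_of_surjective _ (PartitionTuples.consSuccAt_surjective t)
    _ = s * ∑ j ∈ range (t + 1), kTuples s (t - j) := by
        simp only [Nat.card_sigma, Fintype.card_fin, sum_const, card_univ, smul_eq_mul]
        exact congrArg _ (Fin.sum_univ_eq_sum_range (fun j => kTuples s (t - j)) (t + 1))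
    _ = s * ∑ j ∈ range (t + 1), kTuples s j := by
        rw [← sum_range_reflect (kTuples s) (t + 1)]; simp

theorem kTuples_succ_le (s t : ℕ) : kTuples s (t + 1) ≤ s * (s + 1) ^ t := by
  induction t using Nat.strong_induction_on with
  | _ t ih =>
    calc kTuples s (t + 1)
        ≤ s * (∑ j ∈ range t, kTuples s (j + 1) + kTuples s 0) := by
          rw [← sum_range_succ']; exact kTuples_succ_le_mul_sum s t
      _ ≤ s * (∑ j ∈ range t, s * (s + 1) ^ j + 1) := by
          gcongr with j hj
          · exact ih j (mem_range.mp hj)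
          · exact kTuples_zero_le_one s
      _ = s * (s + 1) ^ t := by
          rw [← mul_sum, ← geom_sum_mul_add s t]; ring

theorem two_mul_kTuples_half_lt_pow_general (p w : ℕ) (hp : p.Prime) (hw : 1 ≤ w) :
    2 * kTuples ((p - 1) / 2) w < p ^ w := by
  obtain ⟨t, rfl⟩ := Nat.exists_eq_add_of_le' hw
  set s := (p - 1) / 2
  have hsp : 2 * s + 1 ≤ p := by have := hp.pos; omega
  calc 2 * kTuples s (t + 1)
      ≤ 2 * s * (2 * s + 1) ^ t := by
        rw [mul_assoc]; gcongr; exact (kTuples_succ_le s t).trans (by gcongr; omega)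
    _ < (2 * s + 1) ^ (t + 1) := by rw [pow_succ']; gcongr; omega
    _ ≤ p ^ (t + 1) := by gcongr

theorem two_mul_kTuples_half_lt_pow (p w : ℕ) (hp : p.Prime) (h3 : 3 ≤ p) (hw : 1 ≤ w) :
    2 * kTuples ((p - 1) / 2) w < p ^ w :=
  two_mul_kTuples_half_lt_pow_general p w hp hw
end
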